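/- Let ε ∈ (0,1] and let T be a finite nonempty set of polygonal curves in ℝ^d. Let W = (w₁, …, w_ℓ) be a tuple of ℓ ≥ 1 independent uniform samples from T. Then for any τ, σ ∈ T with Σ_{τ′ ∈ T} d_F(τ, τ′) > (1+ε) Σ_{τ′ ∈ T} d_F(σ, τ′), the probability that Σ_{i=1}^{ℓ} d_F(τ, w_i) ≤ Σ_{i=1}^{ℓ} d_F(σ, w_i) is strictly less than exp(−ε² ℓ / 64). -/

import Mathlib

/-- The (continuous) Fréchet distance between two curves, restricted to the parameter
interval `[0,1]`: the infimum over reparameterizations `h` (continuous bijections of `[0,1]`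
fixing the endpoints) of the supremum over `t ∈ [0,1]` of `dist (τ t) (σ (h t))`. -/
noncomputable def frechetDist {X : Type*} [PseudoMetricSpace X] (τ σ : ℝ → X) : ℝ :=
  sInf {r : ℝ | ∃ h : ℝ → ℝ, ContinuousOn h (Set.Icc 0 1) ∧
    Set.BijOn h (Set.Icc 0 1) (Set.Icc 0 1) ∧ h 0 = 0 ∧ h 1 = 1 ∧
    ∀ t ∈ Set.Icc (0 : ℝ) 1, dist (τ t) (σ (h t)) ≤ r}

/-- `τ` is the polygonal curve with vertices `v` and instants `ts`. -/
def IsPolyOn {X : Type*} [AddCommGroup X] [Module ℝ X] {m : ℕ}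
    (τ : ℝ → X) (v : Fin m → X) (ts : Fin m → ℝ) : Prop :=
  ∀ (i : ℕ) (hi : i + 1 < m), ∀ t : ℝ,
    ts ⟨i, by omega⟩ ≤ t → t ≤ ts ⟨i + 1, hi⟩ →
    τ t = v ⟨i, by omega⟩ +
      ((t - ts ⟨i, by omega⟩) / (ts ⟨i + 1, hi⟩ - ts ⟨i, by omega⟩)) •
        (v ⟨i + 1, hi⟩ - v ⟨i, by omega⟩)

/-- `τ` is a polygonal curve: it linearly interpolates finitely many vertices at
increasing instants `0 = t₁ < … < t_m = 1`. -/
def IsPolygonalCurve {X : Type*} [AddCommGroup X] [Module ℝ X] (τ : ℝ → X) : Prop :=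
  ∃ (m : ℕ) (hm : 2 ≤ m) (v : Fin m → X) (ts : Fin m → ℝ),
    StrictMono ts ∧ ts ⟨0, by omega⟩ = 0 ∧ ts ⟨m - 1, by omega⟩ = 1 ∧ IsPolyOn τ v ts

def FSet {X : Type*} [PseudoMetricSpace X] (τ σ : ℝ → X) : Set ℝ :=
  {r : ℝ | ∃ h : ℝ → ℝ, ContinuousOn h (Set.Icc 0 1) ∧
    Set.BijOn h (Set.Icc 0 1) (Set.Icc 0 1) ∧ h 0 = 0 ∧ h 1 = 1 ∧
    ∀ t ∈ Set.Icc (0 : ℝ) 1, dist (τ t) (σ (h t)) ≤ r}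

lemma frechetDist_eq {X : Type*} [PseudoMetricSpace X] (τ σ : ℝ → X) :
    frechetDist τ σ = sInf (FSet τ σ) := rfl

lemma FSet.nonneg {X : Type*} [PseudoMetricSpace X] {τ σ : ℝ → X} {r : ℝ}
    (hr : r ∈ FSet τ σ) : 0 ≤ r := by
  obtain ⟨h, _, _, _, _, hd⟩ := hr
  exact le_trans dist_nonneg (hd 0 (by constructor <;> norm_num))

lemma frechetDist_nonneg {X : Type*} [PseudoMetricSpace X] (τ σ : ℝ → X) :
    0 ≤ frechetDist τ σ :=
  Real.sInf_nonneg (fun _ hr => FSet.nonneg hr)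

lemma FSet.bddBelow {X : Type*} [PseudoMetricSpace X] (τ σ : ℝ → X) :
    BddBelow (FSet τ σ) := ⟨0, fun _ hr => FSet.nonneg hr⟩

lemma FSet.symm_mem {X : Type*} [MetricSpace X] {τ σ : ℝ → X} {r : ℝ}
    (hr : r ∈ FSet τ σ) : r ∈ FSet σ τ := by
  obtain ⟨h, hc, hb, h0, h1, hd⟩ := hr
  set I : Set ℝ := Set.Icc 0 1 with hI
  have h0I : (0:ℝ) ∈ I := by constructor <;> norm_num
  have h1I : (1:ℝ) ∈ I := by constructor <;> norm_num
  let e : I ≃ I := Set.BijOn.equiv h hb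
  have hecont : Continuous e := by
    exact Continuous.subtype_mk (hc.restrict) _
  let E : I ≃ₜ I := Continuous.homeoOfEquivCompactToT2 (f := e) hecont
  have hEcoe : ∀ x : I, (E x : ℝ) = h x := fun x => rfl
  refine ⟨fun s => if hs : s ∈ I then ((E.symm ⟨s, hs⟩ : I) : ℝ) else 0, ?_, ?_, ?_, ?_, ?_⟩
  · rw [continuousOn_iff_continuous_restrict]
    have : I.restrict (fun s => if hs : s ∈ I then ((E.symm ⟨s, hs⟩ : I) : ℝ) else 0)
        = fun x : I => ((E.symm x : I) : ℝ) := by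
      funext x; simp [Set.restrict, Subtype.coe_eta]
    rw [show (Set.Icc (0:ℝ) 1).domRestrict (fun s => if hs : s ∈ I then ((E.symm ⟨s, hs⟩ : I) : ℝ) else 0) = _ from this]
    exact continuous_subtype_val.comp E.symm.continuous
  · constructor
    · intro s hs; simp only [dif_pos (show s ∈ I from hs)]; exact (E.symm ⟨s, hs⟩).2
    constructor
    · intro s1 hs1 s2 hs2 hgs
      simp only [dif_pos (show s1 ∈ I from hs1), dif_pos (show s2 ∈ I from hs2)] at hgs
      have := E.symm.injective (Subtype.ext hgs)
      exact congrArg Subtype.val this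
    · intro y hy
      refine ⟨(E ⟨y, hy⟩ : I), (E ⟨y, hy⟩).2, ?_⟩
      simp only [dif_pos (E ⟨y, hy⟩).2, Subtype.coe_eta, Homeomorph.symm_apply_apply]
  · have hE0 : E ⟨0, h0I⟩ = ⟨0, h0I⟩ := Subtype.ext (by rw [hEcoe]; exact h0)
    simp only [dif_pos h0I]
    rw [← hE0, Homeomorph.symm_apply_apply]
  · have hE1 : E ⟨1, h1I⟩ = ⟨1, h1I⟩ := Subtype.ext (by rw [hEcoe]; exact h1)
    simp only [dif_pos h1I]
    rw [← hE1, Homeomorph.symm_apply_apply]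
  · intro s hs
    simp only [dif_pos (show s ∈ I from hs)]
    have hgI : ((E.symm ⟨s, hs⟩ : I) : ℝ) ∈ I := (E.symm ⟨s, hs⟩).2
    have hhg : h ((E.symm ⟨s, hs⟩ : I) : ℝ) = s := by
      have := hEcoe (E.symm ⟨s, hs⟩)
      rw [Homeomorph.apply_symm_apply] at this
      exact this.symm
    calc dist (σ s) (τ ((E.symm ⟨s, hs⟩ : I) : ℝ))
        = dist (τ ((E.symm ⟨s, hs⟩ : I) : ℝ)) (σ (h ((E.symm ⟨s, hs⟩ : I) : ℝ))) := by
          rw [hhg, dist_comm]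
      _ ≤ r := hd _ hgI

lemma frechetDist_comm {X : Type*} [MetricSpace X] (τ σ : ℝ → X) :
    frechetDist τ σ = frechetDist σ τ := by
  rw [frechetDist_eq, frechetDist_eq]
  congr 1
  exact Set.Subset.antisymm (fun r hr => FSet.symm_mem hr) (fun r hr => FSet.symm_mem hr)

lemma FSet.comp_mem {X : Type*} [PseudoMetricSpace X] {τ σ ρ : ℝ → X} {r1 r2 : ℝ}
    (h1 : r1 ∈ FSet τ σ) (h2 : r2 ∈ FSet σ ρ) : r1 + r2 ∈ FSet τ ρ := by
  obtain ⟨g1, hc1, hb1, g10, g11, hd1⟩ := h1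
  obtain ⟨g2, hc2, hb2, g20, g21, hd2⟩ := h2
  refine ⟨g2 ∘ g1, hc2.comp hc1 hb1.mapsTo, hb2.comp hb1, ?_, ?_, ?_⟩
  · simp [Function.comp, g10, g20]
  · simp [Function.comp, g11, g21]
  · intro t ht
    calc dist (τ t) (ρ ((g2 ∘ g1) t))
        ≤ dist (τ t) (σ (g1 t)) + dist (σ (g1 t)) (ρ (g2 (g1 t))) := dist_triangle _ _ _
      _ ≤ r1 + r2 := add_le_add (hd1 t ht) (hd2 (g1 t) (hb1.mapsTo ht))

lemma frechetDist_triangle {X : Type*} [PseudoMetricSpace X] {τ σ ρ : ℝ → X}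
    (h1 : (FSet τ σ).Nonempty) (h2 : (FSet σ ρ).Nonempty) :
    frechetDist τ ρ ≤ frechetDist τ σ + frechetDist σ ρ := by
  have key : ∀ r1 ∈ FSet τ σ, ∀ r2 ∈ FSet σ ρ, frechetDist τ ρ ≤ r1 + r2 := by
    intro r1 hr1 r2 hr2
    exact csInf_le (FSet.bddBelow τ ρ) (FSet.comp_mem hr1 hr2)
  have step : ∀ r1 ∈ FSet τ σ, frechetDist τ ρ - r1 ≤ frechetDist σ ρ := by
    intro r1 hr1
    exact le_csInf h2 (fun r2 hr2 => by linarith [key r1 hr1 r2 hr2])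
  have : frechetDist τ ρ - frechetDist σ ρ ≤ frechetDist τ σ :=
    le_csInf h1 (fun r1 hr1 => by linarith [step r1 hr1])
  linarith

lemma poly_bounded {X : Type*} [NormedAddCommGroup X] [NormedSpace ℝ X] {τ : ℝ → X}
    (hτ : IsPolygonalCurve τ) : ∃ C : ℝ, ∀ t ∈ Set.Icc (0:ℝ) 1, ‖τ t‖ ≤ C := by
  obtain ⟨m, hm, v, ts, hmono, hts0, hts1, hpoly⟩ := hτ
  refine ⟨3 * ∑ j, ‖v j‖, ?_⟩
  intro t ht
  -- find a segment containing t
  obtain ⟨i, hi, hle, hge⟩ : ∃ (i : ℕ) (hi : i + 1 < m),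
      ts ⟨i, by omega⟩ ≤ t ∧ t ≤ ts ⟨i + 1, hi⟩ := by
    classical
    set S : Finset (Fin m) := Finset.univ.filter (fun i : Fin m => ts i ≤ t) with hS
    have hSne : S.Nonempty := by
      refine ⟨⟨0, by omega⟩, ?_⟩
      simp only [hS, Finset.mem_filter, Finset.mem_univ, true_and]
      rw [hts0]; exact ht.1
    set k := S.max' hSne with hk
    have hkmem : k ∈ S := S.max'_mem hSne
    have hkle : ts k ≤ t := by
      simpa only [hS, Finset.mem_filter, Finset.mem_univ, true_and] using hkmem
    by_cases hkm : (k : ℕ) = m - 1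
    · -- then t = 1, use segment m-2
      have hkeq : k = ⟨m - 1, by omega⟩ := Fin.ext hkm
      have ht1 : t = 1 := le_antisymm ht.2 (by rw [hkeq, hts1] at hkle; exact hkle)
      refine ⟨m - 2, by omega, ?_, ?_⟩
      · have : (⟨m - 2, by omega⟩ : Fin m) ≤ ⟨m - 1, by omega⟩ := by
          simp [Fin.le_def]; omega
        calc ts ⟨m - 2, by omega⟩ ≤ ts ⟨m - 1, by omega⟩ := hmono.monotone this
          _ = 1 := hts1
          _ = t := ht1.symm
      · have : (⟨m - 2 + 1, by omega⟩ : Fin m) = ⟨m - 1, by omega⟩ := by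
          apply Fin.ext; simp; omega
        rw [this, hts1, ht1]
    · have hklt : (k : ℕ) + 1 < m := by have := k.2; omega
      refine ⟨k, hklt, ?_, ?_⟩
      · convert hkle using 2
      · by_contra hcon
        push_neg at hcon
        have hmem : (⟨(k : ℕ) + 1, hklt⟩ : Fin m) ∈ S := by
          simp only [hS, Finset.mem_filter, Finset.mem_univ, true_and]
          exact le_of_lt hcon
        have := S.le_max' _ hmem
        rw [← hk] at this
        simp [Fin.le_def] at this
  -- now bound the norm on the segment
  set i0 : Fin m := ⟨i, by omega⟩
  set i1 : Fin m := ⟨i + 1, hi⟩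
  have hΔ : 0 < ts i1 - ts i0 := by
    have : i0 < i1 := by simp [i0, i1, Fin.lt_def]
    linarith [hmono this]
  have hfor := hpoly i hi t hle hge
  rw [hfor]
  have hs0 : 0 ≤ (t - ts i0) / (ts i1 - ts i0) := div_nonneg (by linarith) (le_of_lt hΔ)
  have hs1 : (t - ts i0) / (ts i1 - ts i0) ≤ 1 := (div_le_one hΔ).2 (by linarith)
  have h1 : ‖v i0‖ ≤ ∑ j, ‖v j‖ :=
    Finset.single_le_sum (fun j _ => norm_nonneg (v j)) (Finset.mem_univ i0)
  have h2 : ‖v i1‖ ≤ ∑ j, ‖v j‖ :=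
    Finset.single_le_sum (fun j _ => norm_nonneg (v j)) (Finset.mem_univ i1)
  calc ‖v i0 + ((t - ts i0) / (ts i1 - ts i0)) • (v i1 - v i0)‖
      ≤ ‖v i0‖ + ‖((t - ts i0) / (ts i1 - ts i0)) • (v i1 - v i0)‖ := norm_add_le _ _
    _ = ‖v i0‖ + |(t - ts i0) / (ts i1 - ts i0)| * ‖v i1 - v i0‖ := by
        rw [norm_smul, Real.norm_eq_abs]
    _ ≤ ‖v i0‖ + 1 * (‖v i1‖ + ‖v i0‖) := by
        apply add_le_add_right
        apply mul_le_mul (by rw [abs_of_nonneg hs0]; exact hs1) (norm_sub_le _ _)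
          (norm_nonneg _) zero_le_one
    _ ≤ 3 * ∑ j, ‖v j‖ := by linarith

lemma FSet.nonempty_of_poly {X : Type*} [NormedAddCommGroup X] [NormedSpace ℝ X]
    {τ σ : ℝ → X} (hτ : IsPolygonalCurve τ) (hσ : IsPolygonalCurve σ) :
    (FSet τ σ).Nonempty := by
  obtain ⟨Cτ, hCτ⟩ := poly_bounded hτ
  obtain ⟨Cσ, hCσ⟩ := poly_bounded hσ
  refine ⟨Cτ + Cσ, id, continuousOn_id, Set.bijOn_id _, rfl, rfl, ?_⟩
  intro t ht
  rw [dist_eq_norm]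
  calc ‖τ t - σ (id t)‖ ≤ ‖τ t‖ + ‖σ t‖ := norm_sub_le _ _
    _ ≤ Cτ + Cσ := add_le_add (hCτ t ht) (hCσ t ht)

set_option maxHeartbeats 1600000 in
/-- Indyk's sampling bound. Let `T = {T 0, …, T (n-1)}` be a finite set of
polygonal curves and let `W = (w₁, …, w_ℓ)` be `ℓ ≥ 1` independent uniform samples from `T`
(formalized by counting: the probability of an event is the number of tuples
`w : Fin ℓ → Fin n` realizing it, divided by `n ^ ℓ`). If
`Σ_{τ' ∈ T} d_F(τ, τ') > (1+ε) Σ_{τ' ∈ T} d_F(σ, τ')`, then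
`Pr[Σᵢ d_F(τ, wᵢ) ≤ Σᵢ d_F(σ, wᵢ)] < exp(-ε² ℓ / 64)`. -/
theorem indyk_median_sampling {d : ℕ} (ε : ℝ) (hε0 : 0 < ε) (hε1 : ε ≤ 1)
    {n : ℕ} (hn : 0 < n) (T : Fin n → ℝ → EuclideanSpace ℝ (Fin d))
    (hpoly : ∀ i, IsPolygonalCurve (T i)) (hinj : Function.Injective T)
    (ℓ : ℕ) (hℓ : 1 ≤ ℓ) (a b : Fin n)
    (hab : (1 + ε) * ∑ j, frechetDist (T b) (T j) < ∑ j, frechetDist (T a) (T j)) :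
    ((Finset.univ.filter (fun w : Fin ℓ → Fin n =>
        ∑ i, frechetDist (T a) (T (w i)) ≤ ∑ i, frechetDist (T b) (T (w i)))).card : ℝ)
        / (n : ℝ) ^ ℓ
      < Real.exp (-(ε ^ 2 * ℓ) / 64) := by
  classical
  have hne : ∀ i j : Fin n, (FSet (T i) (T j)).Nonempty :=
    fun i j => FSet.nonempty_of_poly (hpoly i) (hpoly j)
  set dA : Fin n → ℝ := fun j => frechetDist (T a) (T j) with hdA
  set dB : Fin n → ℝ := fun j => frechetDist (T b) (T j) with hdB
  simp only [show ∀ j, frechetDist (T a) (T j) = dA j from fun j => rfl,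
    show ∀ j, frechetDist (T b) (T j) = dB j from fun j => rfl]
  set X : Fin n → ℝ := fun j => dA j - dB j with hX
  set A : ℝ := ∑ j, dA j with hA
  set B : ℝ := ∑ j, dB j with hB
  set D : ℝ := frechetDist (T a) (T b) with hD
  have hA0 : 0 ≤ A := Finset.sum_nonneg fun j _ => frechetDist_nonneg _ _
  have hB0 : 0 ≤ B := Finset.sum_nonneg fun j _ => frechetDist_nonneg _ _
  have hD0 : 0 ≤ D := frechetDist_nonneg _ _
  have htri1 : ∀ j, dA j ≤ D + dB j := fun j => frechetDist_triangle (hne a b) (hne b j)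
  have htri2 : ∀ j, dB j ≤ D + dA j := by
    intro j
    have := frechetDist_triangle (τ := T b) (σ := T a) (ρ := T j) (hne b a) (hne a j)
    rwa [frechetDist_comm (T b) (T a)] at this
  have htri3 : ∀ j, D ≤ dA j + dB j := by
    intro j
    have := frechetDist_triangle (τ := T a) (σ := T j) (ρ := T b) (hne a j) (hne j b)
    rwa [frechetDist_comm (T j) (T b)] at this
  have hnD : (n : ℝ) * D ≤ A + B := by
    have := Finset.sum_le_sum (fun j (_ : j ∈ Finset.univ) => htri3 j)
    simpa [Finset.sum_add_distrib, Finset.sum_const, Finset.card_univ, nsmul_eq_mul,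
      ← hA, ← hB] using this
  have hABD : A ≤ (n : ℝ) * D + B := by
    have := Finset.sum_le_sum (fun j (_ : j ∈ Finset.univ) => htri1 j)
    simpa [Finset.sum_add_distrib, Finset.sum_const, Finset.card_univ, nsmul_eq_mul,
      ← hA, ← hB] using this
  clear_value X A B D
  have hABε : (1 + ε) * B < A := hab
  have hDpos : 0 < D := by
    rcases lt_or_eq_of_le hD0 with h | h
    · exact h
    · exfalso
      rw [← h, mul_zero, zero_add] at hABD
      nlinarith
  -- key separation: A - B ≥ (ε/3) * (n * D)
  have hsep : (ε / 3) * ((n : ℝ) * D) ≤ A - B := by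
    nlinarith [mul_nonneg (mul_nonneg hε0.le (sub_nonneg.2 hε1)) hB0,
      mul_le_mul_of_nonneg_left hnD (by linarith : (0:ℝ) ≤ ε / 3)]
  set c : ℝ := ε / 3 with hc
  have hc0 : 0 < c := by positivity
  have hc1 : c ≤ 1 / 3 := by rw [hc]; linarith
  clear_value c
  have h1c : 0 < 1 - c := by linarith
  have h1c' : 0 < 1 + c := by linarith
  set z : ℝ := Real.sqrt ((1 + c) / (1 - c)) with hz
  have hzpos : 0 < z := Real.sqrt_pos.2 (by positivity)
  have hz2 : z ^ 2 = (1 + c) / (1 - c) := Real.sq_sqrt (by positivity)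
  have hz1 : 1 ≤ z := by
    have hz2ge : 1 ≤ z ^ 2 := by
      rw [hz2, le_div_iff₀ h1c]; linarith
    nlinarith
  clear_value z
  set q : ℝ := Real.sqrt (1 - c ^ 2) with hq
  have hcc : 0 < 1 - c ^ 2 := by nlinarith
  have hqpos : 0 < q := Real.sqrt_pos.2 hcc
  have hkey1 : (1 - c) * z = q := by
    have hsq : ((1 - c) * z) ^ 2 = 1 - c ^ 2 := by
      rw [mul_pow, hz2]; field_simp; ring
    rw [show q = Real.sqrt (((1 - c) * z) ^ 2) by rw [hsq],
      Real.sqrt_sq (by positivity)]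
  have hkey2 : (1 + c) * z⁻¹ = q := by
    have hsq : ((1 + c) * z⁻¹) ^ 2 = 1 - c ^ 2 := by
      rw [mul_pow, inv_pow, hz2]
      field_simp
      ring
    rw [show q = Real.sqrt (((1 + c) * z⁻¹) ^ 2) by rw [hsq],
      Real.sqrt_sq (by positivity)]
  set t₀ : ℝ := Real.log z / D with ht₀
  clear_value q
  have ht₀0 : 0 ≤ t₀ := div_nonneg (Real.log_nonneg hz1) hD0
  have hexp_t₀D : Real.exp (t₀ * D) = z := by
    rw [ht₀, div_mul_cancel₀ _ (ne_of_gt hDpos), Real.exp_log hzpos]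
  clear_value t₀
  -- per-sample mgf bound
  have hmgf : ∀ j, Real.exp (-(t₀ * X j)) ≤ (z + z⁻¹) / 2 - X j * ((z - z⁻¹) / (2 * D)) := by
    intro j
    have hXub : X j ≤ D := by have := htri1 j; simp only [hX]; linarith
    have hXlb : -D ≤ X j := by have := htri2 j; simp only [hX]; linarith
    have hlam0 : 0 ≤ (D - X j) / (2 * D) := div_nonneg (by linarith) (by linarith)
    have hmu0 : 0 ≤ (D + X j) / (2 * D) := div_nonneg (by linarith) (by linarith)
    have hsum1 : (D - X j) / (2 * D) + (D + X j) / (2 * D) = 1 := by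
      field_simp
      ring
    have hconv := convexOn_exp.2 (Set.mem_univ (t₀ * D)) (Set.mem_univ (-(t₀ * D)))
      hlam0 hmu0 hsum1
    have hx : ∀ y : ℝ, y / (2 * D) * (t₀ * D) = y * t₀ / 2 := by
      intro y
      rw [div_mul_eq_mul_div,
        div_eq_div_iff (by positivity : (2*D:ℝ) ≠ 0) (by norm_num : (2:ℝ) ≠ 0)]
      ring
    have harg : ((D - X j) / (2 * D)) • (t₀ * D) + ((D + X j) / (2 * D)) • (-(t₀ * D))
        = -(t₀ * X j) := by
      simp only [smul_eq_mul, mul_neg]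
      rw [hx, hx]
      ring
    rw [harg] at hconv
    calc Real.exp (-(t₀ * X j))
        ≤ (D - X j) / (2 * D) * Real.exp (t₀ * D)
          + (D + X j) / (2 * D) * Real.exp (-(t₀ * D)) := hconv
      _ = (D - X j) / (2 * D) * z + (D + X j) / (2 * D) * z⁻¹ := by
          rw [Real.exp_neg, hexp_t₀D]
      _ = (z + z⁻¹) / 2 - X j * ((z - z⁻¹) / (2 * D)) := by
          have hhalf : D / (2 * D) = 1 / 2 := by
            rw [mul_comm, div_mul_cancel_left₀ (ne_of_gt hDpos)]
            norm_num
          rw [sub_div, add_div, hhalf]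
          ring
  -- sum of mgf bound
  have hsum_mgf : ∑ j, Real.exp (-(t₀ * X j)) ≤ (n : ℝ) * q := by
    calc ∑ j, Real.exp (-(t₀ * X j))
        ≤ ∑ j, ((z + z⁻¹) / 2 - X j * ((z - z⁻¹) / (2 * D))) :=
          Finset.sum_le_sum (fun j _ => hmgf j)
      _ = (n : ℝ) * ((z + z⁻¹) / 2) - (A - B) * ((z - z⁻¹) / (2 * D)) := by
          rw [Finset.sum_sub_distrib, Finset.sum_const, Finset.card_univ, ← Finset.sum_mul]
          simp only [Fintype.card_fin, nsmul_eq_mul]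
          congr 1
          congr 1
          simp only [hX, Finset.sum_sub_distrib, ← hA, ← hB]
      _ ≤ (n : ℝ) * ((z + z⁻¹) / 2) - (c * ((n:ℝ) * D)) * ((z - z⁻¹) / (2 * D)) := by
          have hzz : 0 ≤ (z - z⁻¹) / (2 * D) := by
            apply div_nonneg _ (by linarith)
            have : z⁻¹ ≤ 1 := by
              rw [inv_le_one_iff₀]; right; exact hz1
            linarith
          have := mul_le_mul_of_nonneg_right hsep hzz
          linarith
      _ = (n : ℝ) * (((1 - c) * z + (1 + c) * z⁻¹) / 2) := by
          have hcan : (c * ((n:ℝ) * D)) * ((z - z⁻¹) / (2 * D))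
              = (n:ℝ) * (c * (z - z⁻¹) / 2) := by
            rw [← mul_div_assoc, ← mul_div_assoc,
              div_eq_div_iff (by positivity : (2*D:ℝ) ≠ 0) (by norm_num : (2:ℝ) ≠ 0)]
            ring
          rw [hcan]
          ring

      _ = (n : ℝ) * q := by rw [hkey1, hkey2]; ring
  -- q is strictly below the exponential bound
  have hqlt : q < Real.exp (-(ε ^ 2) / 64) := by
    have h2 : Real.exp (-(ε ^ 2) / 64) ^ 2 = Real.exp (-(ε ^ 2) / 32) := by
      rw [← Real.exp_nat_mul]
      congr 1
      push_cast
      ring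
    rw [hq]
    rw [show Real.exp (-(ε ^ 2) / 64) = Real.sqrt (Real.exp (-(ε ^ 2) / 32)) by
      rw [← h2, Real.sqrt_sq (Real.exp_nonneg _)]]
    apply Real.sqrt_lt_sqrt hcc.le
    calc 1 - c ^ 2 ≤ Real.exp (-(c ^ 2)) := by
          have := Real.add_one_le_exp (-(c ^ 2)); linarith
      _ < Real.exp (-(ε ^ 2) / 32) := by
          apply Real.exp_lt_exp.2
          rw [hc]
          have hεsq : 0 < ε ^ 2 := by positivity
          nlinarith [hεsq]
  -- Markov / counting step
  set F : Finset (Fin ℓ → Fin n) := Finset.univ.filter (fun w : Fin ℓ → Fin n =>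
      ∑ i, dA (w i) ≤ ∑ i, dB (w i)) with hF
  have hcard : (F.card : ℝ) ≤ ∑ w : Fin ℓ → Fin n, ∏ i, Real.exp (-(t₀ * X (w i))) := by
    calc (F.card : ℝ) = ∑ _w ∈ F, (1 : ℝ) := by rw [Finset.sum_const]; simp
      _ ≤ ∑ w ∈ F, ∏ i, Real.exp (-(t₀ * X (w i))) := by
          apply Finset.sum_le_sum
          intro w hw
          rw [hF, Finset.mem_filter] at hw
          rw [← Real.exp_sum]
          apply Real.one_le_exp
          have hsle : ∑ i, X (w i) ≤ 0 := by
            simp only [hX, Finset.sum_sub_distrib]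
            linarith [hw.2]
          have : ∑ i, -(t₀ * X (w i)) = -(t₀ * ∑ i, X (w i)) := by
            rw [Finset.mul_sum]
            exact Finset.sum_neg_distrib _
          rw [this]
          have := mul_nonpos_of_nonneg_of_nonpos ht₀0 hsle
          linarith
      _ ≤ ∑ w : Fin ℓ → Fin n, ∏ i, Real.exp (-(t₀ * X (w i))) := by
          apply Finset.sum_le_sum_of_subset_of_nonneg (Finset.filter_subset _ _)
          intro w _ _
          exact Finset.prod_nonneg fun i _ => (Real.exp_pos _).le
  have hprod : ∑ w : Fin ℓ → Fin n, ∏ i, Real.exp (-(t₀ * X (w i)))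
      = (∑ j, Real.exp (-(t₀ * X j))) ^ ℓ :=
    (Fintype.sum_pow (fun j => Real.exp (-(t₀ * X j))) ℓ).symm
  have hfinal : (F.card : ℝ) ≤ ((n : ℝ) * q) ^ ℓ := by
    rw [hprod] at hcard
    calc (F.card : ℝ) ≤ (∑ j, Real.exp (-(t₀ * X j))) ^ ℓ := hcard
      _ ≤ ((n : ℝ) * q) ^ ℓ := by
          apply pow_le_pow_left₀ (Finset.sum_nonneg fun j _ => (Real.exp_pos _).le) hsum_mgf
  have hnpos : (0 : ℝ) < (n : ℝ) ^ ℓ := by positivity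
  rw [div_lt_iff₀ hnpos]
  calc (F.card : ℝ) ≤ ((n : ℝ) * q) ^ ℓ := hfinal
    _ = q ^ ℓ * (n : ℝ) ^ ℓ := by rw [mul_pow]; ring
    _ < Real.exp (-(ε ^ 2 * ℓ) / 64) * (n : ℝ) ^ ℓ := by
        apply mul_lt_mul_of_pos_right _ hnpos
        calc q ^ ℓ < Real.exp (-(ε ^ 2) / 64) ^ ℓ :=
              pow_lt_pow_left₀ hqlt hqpos.le (by omega)
          _ = Real.exp (-(ε ^ 2 * ℓ) / 64) := by
              rw [← Real.exp_nat_mul]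
              congr 1
              ring
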